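/- Let A be a real symmetric n×n matrix, v ∈ ℝⁿ nonzero, and suppose there exist c ∈ ℝ and 0 < N' < N'' such that λ_min(A - (2/N) v vᵀ) = c - (2/N)(vᵀ v) for all N ∈ [N', N'']. Then v lies in the minimal eigenspace of A - (2/N'') v vᵀ. -/

import Mathlib

/-!
Write `M t = A - t • v vᵀ` and `s = v ⬝ᵥ v`, so that `λ_min (M t) = c - t s` at `t₁ = 2/N''` and
`t₂ = 2/N'`, with `t₁ < t₂`. Take a unit minimiser `u` of the Rayleigh quotient of `M t₂`. Its
Rayleigh quotient for `M t₁` is larger by `(t₂ - t₁)(v ⬝ᵥ u)²`, while `λ_min` is larger by only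
`(t₂ - t₁) s`; minimality of `λ_min (M t₁)` gives `s ≤ (v ⬝ᵥ u)²`, which is the equality case of
Cauchy–Schwarz, so `v` is a multiple of `u`. Then `u` also minimises the Rayleigh quotient of
`M t₁`, and a minimiser of the Rayleigh quotient of a symmetric matrix is an eigenvector, because
`M - λ_min • 1` is positive semidefinite.
-/

open Matrix

/-- The smallest eigenvalue of a symmetric matrix, defined via the Rayleigh quotient
as the infimum of `vᵀ M v` over unit vectors `v`. -/
noncomputable def lamMin {ι : Type} [Fintype ι] (M : Matrix ι ι ℝ) : ℝ :=
  ⨅ v : {v : ι → ℝ // ∑ i, (v i) ^ 2 = 1}, (v : ι → ℝ) ⬝ᵥ (M *ᵥ (v : ι → ℝ))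

section

variable {ι : Type}

lemma isSymm_sub_smul_vecMulVec {A : Matrix ι ι ℝ} (hA : A.IsSymm) (t : ℝ) (v : ι → ℝ) :
    (A - t • vecMulVec v v).IsSymm :=
  hA.sub (IsSymm.smul (transpose_vecMulVec v v) t)

variable [Fintype ι]

lemma sum_sq_eq_dotProduct_self (x : ι → ℝ) : ∑ i, x i ^ 2 = x ⬝ᵥ x := by
  simp only [dotProduct, sq]

lemma isCompact_sum_sq_eq_one : IsCompact {x : ι → ℝ | ∑ i, x i ^ 2 = 1} := by
  refine (isCompact_univ_pi fun _ => isCompact_Icc (a := (-1 : ℝ)) (b := 1)).of_isClosed_subset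
    (isClosed_eq (by fun_prop) continuous_const) fun x (hx : ∑ j, x j ^ 2 = 1) i _ => ?_
  rw [Set.mem_Icc, ← abs_le, ← sq_le_one_iff_abs_le_one, ← hx]
  exact Finset.single_le_sum (fun j _ => sq_nonneg (x j)) (Finset.mem_univ i)

lemma continuous_dotProduct_mulVec_self (M : Matrix ι ι ℝ) :
    Continuous fun x : ι → ℝ => x ⬝ᵥ (M *ᵥ x) := by
  fun_prop

lemma lamMin_le_dotProduct_mulVec (M : Matrix ι ι ℝ) {x : ι → ℝ} (hx : ∑ i, x i ^ 2 = 1) :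
    lamMin M ≤ x ⬝ᵥ (M *ᵥ x) := by
  refine ciInf_le ?_ (⟨x, hx⟩ : {v : ι → ℝ // ∑ i, v i ^ 2 = 1})
  have h := isCompact_sum_sq_eq_one.bddBelow_image
    (continuous_dotProduct_mulVec_self M).continuousOn
  rwa [Set.image_eq_range] at h

lemma exists_dotProduct_mulVec_eq_lamMin [Nonempty ι] (M : Matrix ι ι ℝ) :
    ∃ u : ι → ℝ, ∑ i, u i ^ 2 = 1 ∧ u ⬝ᵥ (M *ᵥ u) = lamMin M := by
  classical
  have hne : {x : ι → ℝ | ∑ i, x i ^ 2 = 1}.Nonempty :=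
    ⟨Pi.single (Classical.arbitrary ι) 1, by simp [Pi.single_apply]⟩
  obtain ⟨u, hu, hmin⟩ := isCompact_sum_sq_eq_one.exists_isMinOn hne
    (continuous_dotProduct_mulVec_self M).continuousOn
  have : Nonempty {v : ι → ℝ // ∑ i, v i ^ 2 = 1} := ⟨⟨u, hu⟩⟩
  exact ⟨u, hu, le_antisymm (le_ciInf fun x => hmin x.2) (lamMin_le_dotProduct_mulVec M hu)⟩

lemma lamMin_mul_dotProduct_self_le (M : Matrix ι ι ℝ) (x : ι → ℝ) :
    lamMin M * (x ⬝ᵥ x) ≤ x ⬝ᵥ (M *ᵥ x) := by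
  rcases eq_or_ne x 0 with rfl | hx
  · simp
  set r := √(x ⬝ᵥ x)
  have hr : 0 < r := Real.sqrt_pos.mpr (dotProduct_self_star_pos_iff.mpr hx)
  have hr2 : r ^ 2 = x ⬝ᵥ x := Real.sq_sqrt (dotProduct_self_star_nonneg x)
  have hunit : ∑ i, (r⁻¹ • x) i ^ 2 = 1 := by
    rw [sum_sq_eq_dotProduct_self, smul_dotProduct, dotProduct_smul, smul_eq_mul, smul_eq_mul,
      ← hr2]
    field_simp
  have h := lamMin_le_dotProduct_mulVec M hunit
  rw [smul_dotProduct, mulVec_smul, dotProduct_smul, smul_eq_mul, smul_eq_mul, ← mul_assoc,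
    ← sq, inv_pow, hr2, ← div_eq_inv_mul, le_div_iff₀ (hr2 ▸ by positivity)] at h
  exact h

lemma posSemidef_sub_lamMin_smul_one [DecidableEq ι] {M : Matrix ι ι ℝ} (hM : M.IsSymm) :
    (M - lamMin M • 1).PosSemidef := by
  refine .of_dotProduct_mulVec_nonneg ?_ fun x => ?_
  · exact isHermitian_iff_isSymm.mpr (hM.sub (isSymm_one.smul _))
  · rw [star_trivial, sub_mulVec, smul_mulVec, one_mulVec, dotProduct_sub, dotProduct_smul,
      smul_eq_mul, sub_nonneg]
    exact lamMin_mul_dotProduct_self_le M x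

lemma mulVec_eq_lamMin_smul_of_dotProduct_mulVec_eq_lamMin {M : Matrix ι ι ℝ} (hM : M.IsSymm)
    {u : ι → ℝ} (hu : ∑ i, u i ^ 2 = 1) (h : u ⬝ᵥ (M *ᵥ u) = lamMin M) :
    M *ᵥ u = lamMin M • u := by
  classical
  have hker := (posSemidef_sub_lamMin_smul_one hM).dotProduct_mulVec_zero_iff u
  rw [star_trivial, sub_mulVec, smul_mulVec, one_mulVec, dotProduct_sub, dotProduct_smul,
    smul_eq_mul, ← sum_sq_eq_dotProduct_self, hu, h, mul_one, sub_self, sub_eq_zero] at hker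
  exact hker.mp rfl

lemma dotProduct_sub_smul_vecMulVec_mulVec (A : Matrix ι ι ℝ) (t : ℝ) (v x : ι → ℝ) :
    x ⬝ᵥ ((A - t • vecMulVec v v) *ᵥ x) = x ⬝ᵥ (A *ᵥ x) - t * (v ⬝ᵥ x) ^ 2 := by
  rw [sub_mulVec, smul_mulVec, vecMulVec_mulVec, op_smul_eq_smul, dotProduct_sub,
    dotProduct_smul, dotProduct_smul, dotProduct_comm x v, smul_eq_mul, smul_eq_mul, sq]

lemma eq_dotProduct_smul_of_dotProduct_self_le {u v : ι → ℝ} (hu : u ⬝ᵥ u = 1)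
    (h : v ⬝ᵥ v ≤ (v ⬝ᵥ u) ^ 2) : v = (v ⬝ᵥ u) • u := by
  have hw : (v - (v ⬝ᵥ u) • u) ⬝ᵥ (v - (v ⬝ᵥ u) • u) = v ⬝ᵥ v - (v ⬝ᵥ u) ^ 2 := by
    simp only [sub_dotProduct, dotProduct_sub, smul_dotProduct, dotProduct_smul, smul_eq_mul, hu,
      dotProduct_comm u v]
    ring
  rw [← sub_eq_zero, ← dotProduct_self_eq_zero, hw]
  exact le_antisymm (sub_nonpos.mpr h) (hw ▸ dotProduct_self_star_nonneg _)

theorem mulVec_eq_lamMin_smul_of_lamMin_sub_smul_vecMulVec {A : Matrix ι ι ℝ} (hA : A.IsSymm)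
    (v : ι → ℝ) {c t₁ t₂ : ℝ} (ht : t₁ < t₂)
    (h₁ : lamMin (A - t₁ • vecMulVec v v) = c - t₁ * (v ⬝ᵥ v))
    (h₂ : lamMin (A - t₂ • vecMulVec v v) = c - t₂ * (v ⬝ᵥ v)) :
    (A - t₁ • vecMulVec v v) *ᵥ v = lamMin (A - t₁ • vecMulVec v v) • v := by
  cases isEmpty_or_nonempty ι
  · exact Subsingleton.elim _ _
  obtain ⟨u, hu, hmin⟩ := exists_dotProduct_mulVec_eq_lamMin (A - t₂ • vecMulVec v v)
  have hle := lamMin_le_dotProduct_mulVec (A - t₁ • vecMulVec v v) hu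
  rw [dotProduct_sub_smul_vecMulVec_mulVec, h₂] at hmin
  rw [dotProduct_sub_smul_vecMulVec_mulVec, h₁] at hle
  -- `hle` and `hmin` combine to `(t₂ - t₁) * (v ⬝ᵥ v - (v ⬝ᵥ u) ^ 2) ≤ 0`
  have hsq : v ⬝ᵥ v ≤ (v ⬝ᵥ u) ^ 2 := by nlinarith
  have hv := eq_dotProduct_smul_of_dotProduct_self_le (sum_sq_eq_dotProduct_self u ▸ hu) hsq
  have hvv : v ⬝ᵥ v = (v ⬝ᵥ u) ^ 2 := by
    have := congrArg (· ⬝ᵥ v) hv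
    simpa only [smul_dotProduct, smul_eq_mul, dotProduct_comm u v, sq] using this
  have heig := mulVec_eq_lamMin_smul_of_dotProduct_mulVec_eq_lamMin
    (isSymm_sub_smul_vecMulVec hA t₁ v) hu <| by
      rw [dotProduct_sub_smul_vecMulVec_mulVec, h₁, ← hvv]
      rw [← hvv] at hmin
      linarith
  calc (A - t₁ • vecMulVec v v) *ᵥ v = (v ⬝ᵥ u) • ((A - t₁ • vecMulVec v v) *ᵥ u) := by
        rw [← mulVec_smul, ← hv]
    _ = lamMin (A - t₁ • vecMulVec v v) • v := by rw [heig, smul_comm, ← hv]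

end

theorem curvature_sharp_of_affine_shape_general {n : ℕ}
    (A : Matrix (Fin n) (Fin n) ℝ) (hA : A.IsSymm) (v : Fin n → ℝ)
    (c : ℝ) {N' N'' : ℝ} (hN' : 0 < N') (hNN : N' < N'')
    (hshape : ∀ N ∈ Set.Icc N' N'',
      lamMin (A - (2 / N) • vecMulVec v v) = c - (2 / N) * (v ⬝ᵥ v)) :
    (A - (2 / N'') • vecMulVec v v) *ᵥ v
      = lamMin (A - (2 / N'') • vecMulVec v v) • v :=
  mulVec_eq_lamMin_smul_of_lamMin_sub_smul_vecMulVec hA v (div_lt_div_of_pos_left two_pos hN' hNN)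
    (hshape N'' ⟨hNN.le, le_rfl⟩) (hshape N' ⟨le_rfl, hNN.le⟩)

/-- if `λ_min(A - (2/N) v vᵀ) = c - (2/N) vᵀv` on an interval `[N', N'']`
with `0 < N' < N''`, then `v` is a minimal eigenvector of `A - (2/N'') v vᵀ`. -/
theorem curvature_sharp_of_affine_shape {n : ℕ}
    (A : Matrix (Fin n) (Fin n) ℝ) (hA : A.IsSymm) (v : Fin n → ℝ) (hv : v ≠ 0)
    (c : ℝ) {N' N'' : ℝ} (hN' : 0 < N') (hNN : N' < N'')
    (hshape : ∀ N ∈ Set.Icc N' N'',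
      lamMin (A - (2 / N) • vecMulVec v v) = c - (2 / N) * (v ⬝ᵥ v)) :
    (A - (2 / N'') • vecMulVec v v) *ᵥ v
      = lamMin (A - (2 / N'') • vecMulVec v v) • v :=
  curvature_sharp_of_affine_shape_general A hA v c hN' hNN hshape
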